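/- (Convergence condition for the contour expansion of the Ising model.) Let d ≥ 1, J > 0, β > 0 and let Λ ⊂ ℤ^d be finite. For finite nonempty connected (nearest-neighbor) sets S ⊂ ℤ^d, let ∂_e S := {{x,x'} : |x−x'| = 1, x ∈ S, x' ∉ S}, w(S) := exp(−2βJ|∂_e S|), [S]_1 := {x ∈ ℤ^d : dist(x,S) ≤ 1}, and for two such sets let f̂(S,S') := −1 if dist(S,S') ≤ 1 and f̂(S,S') := 0 otherwise; set z_h := e^{2βh}. If h ≤ h_IS := −(1/(2β))(2d + 1 + 2·log(2d) + log 2), then for every finite nonempty connected S* ⊂ Λ, Σ_{S ⊂ Λ, S connected, S ≠ ∅} w(S) z_h^{|S|} |f̂(S,S*)| e^{|[S]_1|} ≤ |[S*]_1|. -/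

import Mathlib

open scoped BigOperators Classical

noncomputable section
namespace IsingCE

/-- squared Euclidean norm on `ℤ^d`; it equals `1` exactly at nearest neighbors. -/
def sqnorm {d : ℕ} (x : Fin d → ℤ) : ℤ := ∑ i, (x i)^2

/-- the nearest neighbor of `x` in direction `i`, forwards (`b = true`) or backwards. -/
def nbr {d : ℕ} (x : Fin d → ℤ) (i : Fin d) (b : Bool) : Fin d → ℤ :=
  fun j => x j + (if j = i then (if b then 1 else -1) else 0)

lemma sqnorm_neg {d : ℕ} (x : Fin d → ℤ) : sqnorm (-x) = sqnorm x := by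
  unfold sqnorm; simp

lemma sqnorm_sub_comm {d : ℕ} (x y : Fin d → ℤ) : sqnorm (x - y) = sqnorm (y - x) := by
  rw [← sqnorm_neg (x - y), neg_sub]

/-- the (2d) nearest neighbors of `x`. -/
def nbrFinset {d : ℕ} (x : Fin d → ℤ) : Finset (Fin d → ℤ) :=
  Finset.image (fun p : Fin d × Bool => nbr x p.1 p.2) Finset.univ

/-- nearest-neighbor graph on the points of `S`. -/
def nnGraph {d : ℕ} (S : Finset (Fin d → ℤ)) : SimpleGraph {x // x ∈ S} where
  Adj a b := sqnorm (a.1 - b.1) = 1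
  symm := by
    constructor
    intro a b hab
    rw [sqnorm_sub_comm]; exact hab
  loopless := by
    constructor
    intro a ha
    simp [sqnorm] at ha

/-- `S` is a connected subset of `ℤ^d`: any two of its points are joined by a
path in `S` whose consecutive points are at Euclidean distance `1`. -/
def FinsetConn {d : ℕ} (S : Finset (Fin d → ℤ)) : Prop := (nnGraph S).Connected

/-- `|∂_e S|`: the number of nearest-neighbor edges `{x,x'}` with `x ∈ S`, `x' ∉ S`. -/
noncomputable def edgeBoundaryCard {d : ℕ} (S : Finset (Fin d → ℤ)) : ℕ :=
  ∑ x ∈ S, ((nbrFinset x).filter (fun y => y ∉ S)).card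

/-- `[S]_1`: the set of lattice points at Euclidean distance at most `1` from `S`. -/
noncomputable def closure1 {d : ℕ} (S : Finset (Fin d → ℤ)) : Finset (Fin d → ℤ) :=
  S ∪ S.biUnion nbrFinset

/-- `f̂(S,S') = -1` if `dist(S,S') ≤ 1`, and `0` otherwise. -/
noncomputable def fhat {d : ℕ} (S S' : Finset (Fin d → ℤ)) : ℝ :=
  if (S ∩ closure1 S').Nonempty then -1 else 0

/-- contour weight `w(S) = exp(-2βJ|∂_e S|)`. -/
noncomputable def contourW (d : ℕ) (β J : ℝ) (S : Finset (Fin d → ℤ)) : ℝ :=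
  Real.exp (-2*β*J * (edgeBoundaryCard S : ℝ))

/-! A contour `S` meeting `[S*]_1` contributes at most `q^{|S|}` with `q = 1/(2(2d)²)`: indeed
`w(S) ≤ 1`, `|[S]_1| ≤ (2d+1)|S|`, and `h ≤ h_IS` says exactly that `e^{2βh} e^{2d+1} ≤ q`.
A connected set of `n` points containing `x` is the set of points visited by a nearest-neighbour
walk from `x` with `2(n-1)` steps (add the points one at a time, each by a back-and-forth detour
across an edge leaving the points already visited), so there are at most `(2d)^{2(n-1)}` of them.
Hence the contours through a fixed `x` contribute at most
`∑_{n ≥ 1} (2d)^{2(n-1)} q^n = (2d)^{-2} ≤ 1`, and a union bound over the points `x ∈ [S*]_1`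
concludes. -/

end IsingCE

section
open Finset
variable {α : Type*}

theorem Finset.sum_filter_inter_nonempty_le {M : Type*} [DecidableEq α] [AddCommMonoid M]
    [PartialOrder M] [IsOrderedAddMonoid M] (F : Finset (Finset α)) (C : Finset α)
    {g : Finset α → M} (hg : ∀ S ∈ F, 0 ≤ g S) :
    ∑ S ∈ F with (S ∩ C).Nonempty, g S ≤ ∑ x ∈ C, ∑ S ∈ F with x ∈ S, g S := by
  rw [sum_comm' (t' := F) (s' := fun S => S ∩ C) (by simp [and_comm, and_assoc]), sum_filter]
  refine sum_le_sum fun S hS => ?_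
  split_ifs with hSC
  · obtain ⟨x, hx⟩ := hSC
    exact single_le_sum (f := fun _ => g S) (fun _ _ => hg S hS) hx
  · exact sum_nonneg fun _ _ => hg S hS

theorem Finset.sum_pow_card_le_div (G : Finset (Finset α)) (hG : ∀ S ∈ G, S.Nonempty)
    {K q : ℝ} (hq : 0 ≤ q) (hKq : K * q < 1)
    (hcount : ∀ m : ℕ, (#{S ∈ G | S.card = m + 1} : ℝ) ≤ K ^ m) :
    ∑ S ∈ G, q ^ S.card ≤ q / (1 - K * q) := by
  have hK : 0 ≤ K := by simpa using (Nat.cast_nonneg _).trans (hcount 1)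
  have hfiber : ∀ m, #{S ∈ G | S.card - 1 = m} = #{S ∈ G | S.card = m + 1} := fun m => by
    congr 1
    exact filter_congr fun S hS => by have := (hG S hS).card_pos; omega
  have hgeom : ∀ s : Finset ℕ, ∑ m ∈ s, (K * q) ^ m ≤ (1 - K * q)⁻¹ := fun s =>
    ((summable_geometric_of_lt_one (by positivity) hKq).sum_le_tsum s
      fun _ _ => by positivity).trans_eq (tsum_geometric_of_lt_one (by positivity) hKq)
  calc ∑ S ∈ G, q ^ S.card = q * ∑ S ∈ G, q ^ (S.card - 1) := by
        rw [mul_sum]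
        refine sum_congr rfl fun S hS => ?_
        rw [← pow_succ', Nat.sub_add_cancel (hG S hS).card_pos]
    _ = q * ∑ m ∈ G.image (·.card - 1), #{S ∈ G | S.card - 1 = m} • q ^ m := by
        rw [sum_comp (fun m => q ^ m) fun S : Finset α => S.card - 1]
    _ ≤ q * ∑ m ∈ G.image (·.card - 1), (K * q) ^ m := by
        gcongr with m
        rw [nsmul_eq_mul, hfiber, mul_pow]
        gcongr
        exact hcount m
    _ ≤ q * (1 - K * q)⁻¹ := by gcongr; exact hgeom _
    _ = q / (1 - K * q) := (div_eq_mul_inv _ _).symm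

end

namespace IsingCE

open Finset

variable {d : ℕ}

lemma nbr_nbr_not (x : Fin d → ℤ) (i : Fin d) (b : Bool) : nbr (nbr x i b) i (!b) = x := by
  funext j
  by_cases hj : j = i <;> cases b <;> simp [nbr, hj]

lemma exists_eq_nbr_of_sqnorm_sub_eq_one {u v : Fin d → ℤ} (h : sqnorm (v - u) = 1) :
    ∃ i b, v = nbr u i b := by
  set δ := v - u with hδ
  obtain ⟨j, hj⟩ : ∃ j, δ j ≠ 0 := by
    by_contra! h0
    simp [sqnorm, h0] at h
  have hsplit : δ j ^ 2 + ∑ k ∈ univ.erase j, δ k ^ 2 = 1 :=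
    (add_sum_erase _ (fun k => δ k ^ 2) (mem_univ j)).trans h
  have hj1 : 0 < δ j ^ 2 := by positivity
  have hrest_nonneg : 0 ≤ ∑ k ∈ univ.erase j, δ k ^ 2 := sum_nonneg fun k _ => sq_nonneg (δ k)
  have hrest : ∀ k ∈ univ.erase j, δ k ^ 2 = 0 :=
    (sum_eq_zero_iff_of_nonneg fun k _ => sq_nonneg (δ k)).mp (by omega)
  obtain ⟨b, hb⟩ : ∃ b : Bool, δ j = if b then 1 else -1 := by
    rcases sq_eq_one_iff.mp (by omega : δ j ^ 2 = 1) with h1 | h1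
    exacts [⟨true, h1⟩, ⟨false, h1⟩]
  refine ⟨j, b, funext fun k => ?_⟩
  by_cases hk : k = j
  · subst hk
    simp only [nbr, if_true, ← hb, hδ, Pi.sub_apply]
    ring
  · have := pow_eq_zero_iff (n := 2) (by norm_num) |>.mp (hrest k (by simpa using hk))
    simp only [hδ, Pi.sub_apply] at this
    simp only [nbr, hk, if_false]
    omega

def walkEnd (x : Fin d → ℤ) : List (Fin d × Bool) → (Fin d → ℤ)
  | [] => x
  | s :: l => walkEnd (nbr x s.1 s.2) l

def walkSupport (x : Fin d → ℤ) : List (Fin d × Bool) → Finset (Fin d → ℤ)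
  | [] => {x}
  | s :: l => insert x (walkSupport (nbr x s.1 s.2) l)

lemma self_mem_walkSupport (x : Fin d → ℤ) (l : List (Fin d × Bool)) :
    x ∈ walkSupport x l := by
  cases l <;> simp [walkSupport]

lemma exists_append_of_mem_walkSupport {x y : Fin d → ℤ} {l : List (Fin d × Bool)}
    (h : y ∈ walkSupport x l) : ∃ l₁ l₂, l = l₁ ++ l₂ ∧ walkEnd x l₁ = y := by
  induction l generalizing x with
  | nil => exact ⟨[], [], rfl, by simpa [walkSupport, walkEnd, eq_comm] using h⟩
  | cons s l ih =>
    rcases mem_insert.mp h with rfl | h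
    · exact ⟨[], s :: l, rfl, rfl⟩
    · obtain ⟨l₁, l₂, rfl, hend⟩ := ih h
      exact ⟨s :: l₁, l₂, rfl, hend⟩

lemma walkSupport_detour (x : Fin d → ℤ) (l₁ l₂ : List (Fin d × Bool)) (i : Fin d) (b : Bool) :
    walkSupport x (l₁ ++ (i, b) :: (i, !b) :: l₂) =
      insert (nbr (walkEnd x l₁) i b) (walkSupport x (l₁ ++ l₂)) := by
  induction l₁ generalizing x with
  | nil =>
    simp only [List.nil_append, walkSupport, walkEnd, nbr_nbr_not]
    rw [insert_comm, insert_eq_of_mem (self_mem_walkSupport x l₂)]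
  | cons s l ih =>
    simp only [List.cons_append, walkSupport, walkEnd, ih]
    exact insert_comm _ _ _

lemma FinsetConn.exists_adj_boundary {S T : Finset (Fin d → ℤ)} (hS : FinsetConn S)
    {x y : Fin d → ℤ} (hx : x ∈ S) (hy : y ∈ S) (hxT : x ∈ T) (hyT : y ∉ T) :
    ∃ u ∈ T, ∃ v ∈ S, v ∉ T ∧ sqnorm (v - u) = 1 := by
  obtain ⟨p⟩ := hS.preconnected ⟨x, hx⟩ ⟨y, hy⟩
  obtain ⟨e, -, hu, hv⟩ := p.exists_boundary_dart {a | a.1 ∈ T} hxT hyT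
  exact ⟨e.fst, hu, e.snd, e.snd.2, hv, by rw [sqnorm_sub_comm]; exact e.adj⟩

lemma FinsetConn.exists_walkSupport_eq {S : Finset (Fin d → ℤ)} (hS : FinsetConn S)
    {x : Fin d → ℤ} (hx : x ∈ S) :
    ∃ l : List (Fin d × Bool), l.length = 2 * (S.card - 1) ∧ walkSupport x l = S := by
  have grow : ∀ k < S.card, ∃ l : List (Fin d × Bool),
      l.length = 2 * k ∧ walkSupport x l ⊆ S ∧ (walkSupport x l).card = k + 1 := by
    intro k
    induction k with
    | zero => exact fun _ => ⟨[], rfl, by simpa [walkSupport], by simp [walkSupport]⟩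
    | succ k ih =>
      intro hk
      obtain ⟨l, hlen, hsub, hcard⟩ := ih (by omega)
      obtain ⟨y, hyS, hyT⟩ := exists_of_ssubset (hsub.ssubset_of_ne (by rintro rfl; omega))
      obtain ⟨u, hu, v, hvS, hvT, huv⟩ :=
        FinsetConn.exists_adj_boundary hS hx hyS (self_mem_walkSupport x l) hyT
      obtain ⟨i, b, rfl⟩ := exists_eq_nbr_of_sqnorm_sub_eq_one huv
      obtain ⟨l₁, l₂, rfl, rfl⟩ := exists_append_of_mem_walkSupport hu
      refine ⟨l₁ ++ (i, b) :: (i, !b) :: l₂, ?_, ?_, ?_⟩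
      · simp only [List.length_append, List.length_cons] at hlen ⊢
        omega
      · rw [walkSupport_detour]
        exact insert_subset hvS hsub
      · rw [walkSupport_detour, card_insert_of_notMem hvT, hcard]
  obtain ⟨l, hlen, hsub, hcard⟩ :=
    grow (S.card - 1) (by have := card_pos.mpr ⟨x, hx⟩; omega)
  exact ⟨l, hlen, eq_of_subset_of_card_le hsub (by omega)⟩

lemma card_le_of_forall_finsetConn (x : Fin d → ℤ) {m : ℕ} (G : Finset (Finset (Fin d → ℤ)))
    (hG : ∀ S ∈ G, x ∈ S ∧ FinsetConn S ∧ S.card = m + 1) :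
    G.card ≤ (2 * d) ^ (2 * m) := by
  let walks : Finset (List.Vector (Fin d × Bool) (2 * m)) := univ
  calc G.card ≤ (walks.image fun l => walkSupport x l.toList).card := by
        refine card_le_card fun S hS => ?_
        obtain ⟨hx, hconn, hcard⟩ := hG S hS
        obtain ⟨l, hlen, rfl⟩ := FinsetConn.exists_walkSupport_eq hconn hx
        exact mem_image.mpr ⟨⟨l, by rw [hlen, hcard]; rfl⟩, mem_univ _, rfl⟩
    _ ≤ walks.card := card_image_le
    _ = (2 * d) ^ (2 * m) := by simp [walks, card_vector, mul_comm]

lemma card_nbrFinset_le (x : Fin d → ℤ) : (nbrFinset x).card ≤ 2 * d :=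
  card_image_le.trans (by simp [mul_comm])

lemma card_closure1_le (S : Finset (Fin d → ℤ)) : (closure1 S).card ≤ (2 * d + 1) * S.card :=
  calc (closure1 S).card ≤ S.card + (S.biUnion nbrFinset).card := card_union_le _ _
    _ ≤ S.card + ∑ x ∈ S, (nbrFinset x).card := by gcongr; exact card_biUnion_le
    _ ≤ S.card + ∑ _x ∈ S, 2 * d := by gcongr with x; exact card_nbrFinset_le x
    _ = (2 * d + 1) * S.card := by rw [sum_const, smul_eq_mul]; ring

lemma contourW_le_one {β J : ℝ} (hβ : 0 ≤ β) (hJ : 0 ≤ J) (S : Finset (Fin d → ℤ)) :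
    contourW d β J S ≤ 1 := by
  rw [contourW, Real.exp_le_one_iff]
  have : 0 ≤ β * J * edgeBoundaryCard S := by positivity
  linarith

lemma abs_fhat (S S' : Finset (Fin d → ℤ)) :
    |fhat S S'| = if (S ∩ closure1 S').Nonempty then 1 else 0 := by
  unfold fhat
  split_ifs <;> norm_num

lemma exp_add_le_of_le_hIS (hd : 0 < d) {β h : ℝ} (hβ : 0 < β)
    (hh : h ≤ -(1/(2*β)) * (2*(d : ℝ) + 1 + 2*Real.log (2*(d : ℝ)) + Real.log 2)) :
    Real.exp (2 * β * h + (2 * d + 1)) ≤ (2 * (2 * (d : ℝ)) ^ 2)⁻¹ := by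
  have hd' : (0 : ℝ) < d := Nat.cast_pos.mpr hd
  have hlog : Real.log (2 * (2 * (d : ℝ)) ^ 2) = Real.log 2 + 2 * Real.log (2 * d) := by
    rw [Real.log_mul two_ne_zero (by positivity), Real.log_pow]
    push_cast
    ring
  have hβh : 2 * β * h ≤ -(2 * d + 1 + 2 * Real.log (2 * d) + Real.log 2) := by
    calc 2 * β * h
        ≤ 2 * β * (-(1/(2*β)) * (2*(d : ℝ) + 1 + 2*Real.log (2*(d : ℝ)) + Real.log 2)) := by
          gcongr
      _ = -(2 * d + 1 + 2 * Real.log (2 * d) + Real.log 2) := by field_simp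
  rw [← Real.exp_log (by positivity : (0 : ℝ) < (2 * (2 * (d : ℝ)) ^ 2)⁻¹), Real.exp_le_exp,
    Real.log_inv, hlog]
  linarith

lemma term_le_of_exp_add_le {β J h q : ℝ} (hβ : 0 ≤ β) (hJ : 0 ≤ J)
    (hq : Real.exp (2 * β * h + (2 * d + 1)) ≤ q) (S S' : Finset (Fin d → ℤ)) :
    contourW d β J S * Real.exp (2 * β * h) ^ S.card * |fhat S S'| *
        Real.exp ((closure1 S).card : ℝ) ≤ |fhat S S'| * q ^ S.card := by
  have hact : Real.exp (2 * β * h) ^ S.card * Real.exp ((closure1 S).card : ℝ) ≤ q ^ S.card :=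
    calc _ ≤ Real.exp (2 * β * h) ^ S.card * Real.exp ((2 * d + 1) * S.card) := by
          gcongr
          exact_mod_cast card_closure1_le S
      _ = Real.exp (2 * β * h + (2 * d + 1)) ^ S.card := by
          rw [mul_comm _ (S.card : ℝ), Real.exp_nat_mul, ← mul_pow, ← Real.exp_add]
      _ ≤ q ^ S.card := by gcongr
  calc _ = contourW d β J S * (Real.exp (2 * β * h) ^ S.card *
          Real.exp ((closure1 S).card : ℝ)) * |fhat S S'| := by ring
    _ ≤ 1 * q ^ S.card * |fhat S S'| := by gcongr; exact contourW_le_one hβ hJ S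
    _ = |fhat S S'| * q ^ S.card := by ring

lemma sum_pow_card_le_one (hd : 0 < d) (x : Fin d → ℤ) (G : Finset (Finset (Fin d → ℤ)))
    (hG : ∀ S ∈ G, x ∈ S ∧ FinsetConn S) :
    ∑ S ∈ G, (2 * (2 * (d : ℝ)) ^ 2)⁻¹ ^ S.card ≤ 1 := by
  set K : ℝ := (2 * d) ^ 2
  have hK : 1 ≤ K := one_le_pow₀ (by have : (1 : ℝ) ≤ d := Nat.one_le_cast.mpr hd; linarith)
  have hKq : K * (2 * K)⁻¹ = 1 / 2 := by field_simp
  have hcount : ∀ m : ℕ, (#{S ∈ G | S.card = m + 1} : ℝ) ≤ K ^ m := fun m => by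
    have := card_le_of_forall_finsetConn x {S ∈ G | S.card = m + 1} fun S hS => by
      obtain ⟨hSG, hcard⟩ := mem_filter.mp hS
      exact ⟨(hG S hSG).1, (hG S hSG).2, hcard⟩
    calc (#{S ∈ G | S.card = m + 1} : ℝ) ≤ ((2 * d) ^ (2 * m) : ℕ) := by exact_mod_cast this
      _ = K ^ m := by push_cast; rw [pow_mul]
  calc ∑ S ∈ G, (2 * K)⁻¹ ^ S.card ≤ (2 * K)⁻¹ / (1 - K * (2 * K)⁻¹) :=
        sum_pow_card_le_div G (fun S hS => ⟨x, (hG S hS).1⟩) (by positivity)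
          (by rw [hKq]; norm_num) hcount
    _ = K⁻¹ := by rw [hKq]; field_simp; ring
    _ ≤ 1 := inv_le_one_of_one_le₀ hK

theorem contour_expansion_convergence_condition_general
    (d : ℕ) (hd : 1 ≤ d) (J β : ℝ) (hJ : 0 < J) (hβ : 0 < β)
    (Λ : Finset (Fin d → ℤ)) (h : ℝ)
    (hh : h ≤ -(1/(2*β)) * (2*(d : ℝ) + 1 + 2*Real.log (2*(d : ℝ)) + Real.log 2))
    (Sstar : Finset (Fin d → ℤ)) :
    ∑ S ∈ Λ.powerset.filter (fun S => S.Nonempty ∧ FinsetConn S),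
        contourW d β J S * Real.exp (2*β*h) ^ S.card * |fhat S Sstar| *
          Real.exp (((closure1 S).card : ℝ)) ≤
      ((closure1 Sstar).card : ℝ) := by
  set F := Λ.powerset.filter (fun S => S.Nonempty ∧ FinsetConn S)
  set q : ℝ := (2 * (2 * (d : ℝ)) ^ 2)⁻¹
  have hq : Real.exp (2 * β * h + (2 * d + 1)) ≤ q := exp_add_le_of_le_hIS hd hβ hh
  calc _ ≤ ∑ S ∈ F, |fhat S Sstar| * q ^ S.card :=
        sum_le_sum fun S _ => term_le_of_exp_add_le hβ.le hJ.le hq S Sstar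
    _ = ∑ S ∈ F with (S ∩ closure1 Sstar).Nonempty, q ^ S.card := by
        simp_rw [abs_fhat, ite_mul, one_mul, zero_mul, sum_filter]
    _ ≤ ∑ x ∈ closure1 Sstar, ∑ S ∈ F with x ∈ S, q ^ S.card :=
        sum_filter_inter_nonempty_le F _ fun _ _ => by positivity
    _ ≤ ∑ _x ∈ closure1 Sstar, (1 : ℝ) := sum_le_sum fun x _ =>
        sum_pow_card_le_one hd x _ fun S hS => by
          simp only [F, mem_filter] at hS
          exact ⟨hS.2, hS.1.2.2⟩
    _ = (closure1 Sstar).card := by simp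

/-- convergence condition for the contour expansion: if
`h ≤ h_IS = -(1/(2β))(2d + 1 + 2 log(2d) + log 2)`, then for every finite nonempty
connected `S* ⊆ Λ`,
`Σ_{S ⊆ Λ connected nonempty} w(S) z_h^{|S|} |f̂(S,S*)| e^{|[S]_1|} ≤ |[S*]_1|`. -/
theorem contour_expansion_convergence_condition
    (d : ℕ) (hd : 1 ≤ d) (J β : ℝ) (hJ : 0 < J) (hβ : 0 < β)
    (Λ : Finset (Fin d → ℤ)) (h : ℝ)
    (hh : h ≤ -(1/(2*β)) * (2*(d : ℝ) + 1 + 2*Real.log (2*(d : ℝ)) + Real.log 2))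
    (Sstar : Finset (Fin d → ℤ)) (hS1 : Sstar ⊆ Λ) (hS2 : Sstar.Nonempty)
    (hS3 : FinsetConn Sstar) :
    ∑ S ∈ Λ.powerset.filter (fun S => S.Nonempty ∧ FinsetConn S),
        contourW d β J S * Real.exp (2*β*h) ^ S.card * |fhat S Sstar| *
          Real.exp (((closure1 S).card : ℝ)) ≤
      ((closure1 Sstar).card : ℝ) :=
  contour_expansion_convergence_condition_general d hd J β hJ hβ Λ h hh Sstar

end IsingCE
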